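/- The list G = (g_1, g_2, g_3, …) contains every nonzero ZF-word (up to leading 0s) exactly once; more precisely, for every n ≥ 1 the block N_n = (g_{F_{n+1}}, …, g_{F_{n+2}−1}) has F_n entries, all of which are ZF-words of length n whose leftmost digit is 1, and every ZF-word of length n with leftmost digit 1 occurs exactly once in N_n. -/

import Mathlib

/-!
Write `10·t` for `true :: false :: t`. A ZF-word of length `n + 2` with leading `1` is `10·t`
for an arbitrary ZF-word `t` of length `n`, and such a `t` either starts with `1` (it lies in
`N n`) or does not (then `true :: t` is a ZF-word of length `n + 1` with leading `1`, so `t`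
is a tail of a word of `N (n + 1)`). Hence, by induction, `N n` lists each ZF-word of length
`n` with leading `1` exactly once, and `|N n| = F n`. Since `F 0 + ⋯ + F (n - 1) =
F (n + 1) - 1`, the block `N n` starts at position `F (n + 1)` of `G`, and every `i ≥ 1` falls
into the block of the largest Fibonacci number `F (m + 1) ≤ i`.
-/

/-- A ZF-word: a binary word (leftmost digit at the head of the list) with no two
consecutive digits `1`. -/
def ZFword (w : List Bool) : Prop :=
  w.Chain' fun a b => ¬(a = true ∧ b = true)

/-- The lists `N_n` of binary words: `N_0 = ()`, `N_1 = (1)` and, for `n ≥ 2`,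
`N_n = 10·rev(N_{n-1}') ++ 10·rev(N_{n-2})`, where `L'` removes the leftmost letter
of each word of `L`, `rev` reverses the order of the list and `10·L` prefixes `10`
to each word of `L`. -/
def Nlist : ℕ → List (List Bool)
  | 0 => []
  | 1 => [[true]]
  | (n + 2) =>
      ((Nlist (n + 1)).map List.tail).reverse.map (fun w => true :: false :: w) ++
        (Nlist n).reverse.map (fun w => true :: false :: w)

/-- The `i`-th term `g_i` (for `i ≥ 1`) of the infinite list
`G = N_1 ++ N_2 ++ N_3 ++ ⋯`; the block `N_n` occupies the (1-indexed) positions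
`F (n+1), …, F (n+2) - 1` of `G`. -/
def Gword (i : ℕ) : List Bool :=
  (((List.range (i + 2)).map Nlist).flatten).getD (i - 1) []

/-- The Hamming distance of two binary words (leftmost digit at the head), the shorter
word being padded with leading `0`s: the number of positions (counted from the right)
at which the two words differ. -/
def hammingWords (w w' : List Bool) : ℕ :=
  ((Finset.range (max w.length w'.length)).filter
    (fun i => w.reverse.getD i false ≠ w'.reverse.getD i false)).card

theorem ZFword_iff_isChain {w : List Bool} :
    ZFword w ↔ w.IsChain fun a b => ¬(a = true ∧ b = true) :=
  Iff.rfl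

@[simp]
theorem ZFword_false_cons_iff {t : List Bool} : ZFword (false :: t) ↔ ZFword t := by
  cases t <;> simp [ZFword_iff_isChain, List.isChain_cons_cons]

@[simp]
theorem ZFword_true_cons_iff {t : List Bool} :
    ZFword (true :: t) ↔ ZFword t ∧ t.head? ≠ some true := by
  rcases t with _ | ⟨_ | _, t⟩ <;> simp [ZFword_iff_isChain, List.isChain_cons_cons]

theorem exists_true_false_cons_eq_iff {n : ℕ} {w : List Bool} :
    (∃ t, t.length = n ∧ ZFword t ∧ true :: false :: t = w) ↔
      w.length = n + 2 ∧ ZFword w ∧ w.head? = some true := by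
  constructor
  · rintro ⟨t, rfl, ht, rfl⟩
    simpa using ht
  · rintro ⟨hl, hz, hh⟩
    rcases w with _ | ⟨_ | _, _ | ⟨_ | _, t⟩⟩ <;> simp_all

theorem List.mem_map_tail_iff_cons_mem {α : Type*} {L : List (List α)} {a : α}
    (h : ∀ u ∈ L, u.head? = some a) {t : List α} : t ∈ L.map List.tail ↔ a :: t ∈ L := by
  refine ⟨fun ht => ?_, fun ht => List.mem_map.2 ⟨_, ht, rfl⟩⟩
  obtain ⟨_ | ⟨b, u⟩, hu, rfl⟩ := List.mem_map.1 ht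
  · simpa using h _ hu
  · simpa [(Option.some.inj (h _ hu)).symm] using hu

theorem List.Nodup.map_tail {α : Type*} {L : List (List α)} {a : α}
    (h : ∀ u ∈ L, u.head? = some a) (hL : L.Nodup) : (L.map List.tail).Nodup :=
  hL.map_on fun x hx y hy hxy => by
    rw [← List.cons_head?_tail (h x hx), ← List.cons_head?_tail (h y hy), hxy]

theorem length_Nlist : ∀ n, (Nlist n).length = Nat.fib n
  | 0 => rfl
  | 1 => rfl
  | n + 2 => by simp [Nlist, length_Nlist n, length_Nlist (n + 1), Nat.fib_add_two, add_comm]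

theorem mem_Nlist_iff : ∀ {n : ℕ} {w : List Bool},
    w ∈ Nlist n ↔ w.length = n ∧ ZFword w ∧ w.head? = some true
  | 0, w => by
    simp only [Nlist, List.not_mem_nil, false_iff, List.length_eq_zero_iff]
    rintro ⟨rfl, -, ⟨⟩⟩
  | 1, w => by
    rcases w with _ | ⟨_ | _, _ | _⟩ <;> simp [Nlist, ZFword_iff_isChain]
  | n + 2, w => by
    have htail (t : List Bool) :
        (∃ u ∈ Nlist (n + 1), u.tail = t) ↔
          t.length = n ∧ ZFword t ∧ t.head? ≠ some true := by
      rw [← List.mem_map, List.mem_map_tail_iff_cons_mem fun u hu => (mem_Nlist_iff.1 hu).2.2,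
        mem_Nlist_iff, ZFword_true_cons_iff]
      simp
    rw [← exists_true_false_cons_eq_iff]
    simp only [Nlist, List.mem_append, List.mem_map, List.mem_reverse, htail]
    simp only [mem_Nlist_iff]
    constructor
    · rintro (⟨t, ⟨hl, hz, -⟩, rfl⟩ | ⟨t, ⟨hl, hz, -⟩, rfl⟩) <;>
        exact ⟨t, hl, hz, rfl⟩
    · rintro ⟨t, hl, hz, rfl⟩
      by_cases hh : t.head? = some true
      · exact .inr ⟨t, ⟨hl, hz, hh⟩, rfl⟩
      · exact .inl ⟨t, ⟨hl, hz, hh⟩, rfl⟩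

theorem head?_of_mem_Nlist {n : ℕ} {w : List Bool} (hw : w ∈ Nlist n) : w.head? = some true :=
  (mem_Nlist_iff.1 hw).2.2

theorem nodup_Nlist : ∀ n, (Nlist n).Nodup
  | 0 => List.nodup_nil
  | 1 => List.nodup_singleton _
  | n + 2 => by
    rw [Nlist, ← List.map_append]
    refine .map (fun _ _ h => by simpa using h) (List.nodup_append.2 ⟨?_, ?_, ?_⟩)
    · exact List.nodup_reverse.2 ((nodup_Nlist (n + 1)).map_tail fun _ => head?_of_mem_Nlist)
    · exact List.nodup_reverse.2 (nodup_Nlist n)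
    · rintro t ht _ hu rfl
      rw [List.mem_reverse, List.mem_map_tail_iff_cons_mem fun _ => head?_of_mem_Nlist] at ht
      exact (ZFword_true_cons_iff.1 (mem_Nlist_iff.1 ht).2.1).2
        (head?_of_mem_Nlist (List.mem_reverse.1 hu))

theorem length_flatten_map_Nlist_range (n : ℕ) :
    ((List.range n).map Nlist).flatten.length + 1 = Nat.fib (n + 1) := by
  induction n with
  | zero => rfl
  | succ n ih =>
    simp only [List.range_succ, List.map_append, List.flatten_append, List.length_append,
      List.map_singleton, List.flatten_singleton, length_Nlist]
    rw [Nat.fib_add_two]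
    omega

theorem Gword_fib_add {n j : ℕ} (hj : j < (Nlist n).length) :
    Gword (Nat.fib (n + 1) + j) = (Nlist n)[j] := by
  -- `Gword i` reads `N 0 ++ ⋯ ++ N (i + 1)`, which contains `N n` because `n ≤ F (n + 1) + 1`.
  obtain ⟨k, hk⟩ : ∃ k, Nat.fib (n + 1) + j + 2 = n + 1 + k :=
    ⟨Nat.fib (n + 1) + j + 1 - n, by have := Nat.le_fib_add_one (n + 1); omega⟩
  have hlen := length_flatten_map_Nlist_range n
  rw [Gword, hk, List.range_add, List.range_succ, List.map_append, List.map_append,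
    List.flatten_append, List.flatten_append, List.map_singleton, List.flatten_singleton,
    List.getD_append _ _ _ _ (by rw [List.length_append]; omega),
    List.getD_append_right _ _ _ _ (by omega), show Nat.fib (n + 1) + j - 1 - _ = j by omega,
    List.getD_eq_getElem]

theorem Nat.exists_fib_succ_add_eq {i : ℕ} (hi : 0 < i) :
    ∃ m, ∃ j < Nat.fib m, Nat.fib (m + 1) + j = i := by
  have h2 : 2 ≤ Nat.greatestFib i := Nat.le_greatestFib.2 (by rwa [Nat.fib_two])
  obtain ⟨m, hm⟩ : ∃ m, Nat.greatestFib i = m + 1 :=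
    ⟨_, (Nat.succ_pred_eq_of_pos (by omega)).symm⟩
  have hlow := Nat.fib_greatestFib_le i
  have hup := Nat.lt_fib_greatestFib_add_one i
  rw [hm] at hlow hup
  rw [Nat.fib_add_two] at hup
  exact ⟨m, i - Nat.fib (m + 1), by omega, by omega⟩

theorem existsUnique_Gword_eq {w : List Bool} (hz : ZFword w) (hh : w.head? = some true) :
    ∃! i, 1 ≤ i ∧ Gword i = w := by
  obtain ⟨j, hj, hjw⟩ := List.getElem_of_mem (mem_Nlist_iff.2 ⟨rfl, hz, hh⟩)
  refine ⟨Nat.fib (w.length + 1) + j, ⟨?_, by rw [Gword_fib_add hj, hjw]⟩, ?_⟩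
  · have : 0 < Nat.fib (w.length + 1) := Nat.fib_pos.2 (by omega)
    omega
  · rintro _ ⟨hi, hGi⟩
    obtain ⟨m, j', hj', rfl⟩ := Nat.exists_fib_succ_add_eq hi
    rw [← length_Nlist] at hj'
    rw [Gword_fib_add hj'] at hGi
    have hm : m = w.length := (mem_Nlist_iff.1 (hGi ▸ List.getElem_mem hj')).1.symm
    subst hm
    rw [(nodup_Nlist _).getElem_inj_iff.1 (hGi.trans hjw.symm)]

/-- The list `G = (g_1, g_2, …)` contains every nonzero ZF-word
(written without leading `0`s, i.e. with leftmost digit `1`) exactly once; more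
precisely, for every `n ≥ 1` the block `N_n = (g_{F (n+1)}, …, g_{F (n+2) - 1})` has
`F n` entries, all of which are ZF-words of length `n` whose leftmost digit is `1`,
and every ZF-word of length `n` with leftmost digit `1` occurs exactly once in `N_n`. -/
theorem grayCode_blocks_list_ZFwords :
    (∀ w : List Bool, ZFword w → w.head? = some true →
      ∃! i : ℕ, 1 ≤ i ∧ Gword i = w) ∧
    ∀ n : ℕ, 1 ≤ n →
      (Nlist n).length = Nat.fib n ∧
      (∀ j, j < Nat.fib n → Gword (Nat.fib (n + 1) + j) = (Nlist n).getD j []) ∧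
      (∀ w ∈ Nlist n, w.length = n ∧ ZFword w ∧ w.head? = some true) ∧
      (∀ w : List Bool, w.length = n → ZFword w → w.head? = some true →
        (Nlist n).count w = 1) := by
  refine ⟨fun w => existsUnique_Gword_eq, fun n _ => ⟨length_Nlist n, fun j hj => ?_,
    fun w => mem_Nlist_iff.1, fun w hl hz hh => ?_⟩⟩
  · rw [← length_Nlist] at hj
    rw [Gword_fib_add hj, List.getD_eq_getElem]
  · exact List.count_eq_one_of_mem (nodup_Nlist n) (mem_Nlist_iff.2 ⟨hl, hz, hh⟩)
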